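/- Throughout the mixed rectification of a semistandard shifted tableau T (which by definition has no low entries in diagonal cells), no intermediate configuration ever has a low entry in a diagonal cell. -/

import Mathlib

/-- An entry of a configuration during mixed rectification: a gap (box outside
the current shape), a bullet `•`, or a letter of the doubled alphabet
(`false` = low/underlined, `true` = high/overlined). -/
inductive MEntry where
  | gap : MEntry
  | bullet : MEntry
  | letter : ℕ → Bool → MEntry
deriving DecidableEq

/-- A configuration (tableau with holes and bullets) during mixed
rectification, indexed by (row, column). -/
abbrev MConfig := ℕ × ℕ → MEntry

/-- One mixed slide, rules (2.1)–(2.6) of mixed jeu de taquin. -/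
def MixedSlide (C C' : MConfig) : Prop := ∃ r c,
  -- (2.1) first diagonal slide
  (r + 1 ≤ c ∧ C (r, c) = .bullet ∧ C (r, c + 1) = .bullet ∧ C (r + 1, c) = .bullet ∧
    (∃ v h, C (r + 1, c + 1) = .letter v h ∧
      C' = fun p => if p = (r, c) then .letter v h
        else if p = (r + 1, c + 1) then .bullet else C p)) ∨
  -- (2.1) second diagonal slide (gap below-left)
  (r ≤ c ∧ C (r, c) = .bullet ∧ C (r, c + 1) = .bullet ∧ C (r + 1, c) = .gap ∧
    (∃ v h, C (r + 1, c + 1) = .letter v h ∧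
      C' = fun p => if p = (r, c) then .letter v h
        else if p = (r + 1, c + 1) then .bullet else C p)) ∨
  -- (2.2) first: a low letter moves up (entries distinct)
  (r + 1 ≤ c ∧ (∃ w hw v, C (r, c) = .letter w hw ∧ C (r, c + 1) = .bullet ∧
    C (r + 1, c) = .bullet ∧ C (r + 1, c + 1) = .letter v false ∧
    (w, hw) ≠ (v, false) ∧
    C' = fun p => if p = (r, c + 1) then .letter v false
      else if p = (r + 1, c + 1) then .bullet else C p)) ∨
  -- (2.2) second: a high letter moves left (entries distinct)
  (r + 1 ≤ c ∧ (∃ w hw v, C (r, c) = .letter w hw ∧ C (r, c + 1) = .bullet ∧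
    C (r + 1, c) = .bullet ∧ C (r + 1, c + 1) = .letter v true ∧
    (w, hw) ≠ (v, true) ∧
    C' = fun p => if p = (r + 1, c) then .letter v true
      else if p = (r + 1, c + 1) then .bullet else C p)) ∨
  -- (2.3) first: a low letter moves left and is raised
  (r ≤ c ∧ (∃ w hw x hx v, C (r, c) = .letter w hw ∧ C (r, c + 1) = .letter x hx ∧
    C (r, c + 2) = .bullet ∧ C (r + 1, c) = .gap ∧ C (r + 1, c + 1) = .bullet ∧
    C (r + 1, c + 2) = .letter v false ∧
    C' = fun p => if p = (r + 1, c + 1) then .letter v true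
      else if p = (r + 1, c + 2) then .bullet else C p)) ∨
  -- (2.3) second: a low letter moves left (equal entries case)
  (r + 2 ≤ c ∧ (∃ v, C (r, c) = .letter v false ∧ C (r, c + 1) = .bullet ∧
    C (r + 1, c) = .bullet ∧ C (r + 1, c + 1) = .letter v false ∧
    C' = fun p => if p = (r + 1, c) then .letter v false
      else if p = (r + 1, c + 1) then .bullet else C p)) ∨
  -- (2.3) third: a high letter moves up (equal entries case)
  (r + 1 ≤ c ∧ (∃ v, C (r, c) = .letter v true ∧ C (r, c + 1) = .bullet ∧
    C (r + 1, c) = .bullet ∧ C (r + 1, c + 1) = .letter v true ∧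
    C' = fun p => if p = (r, c + 1) then .letter v true
      else if p = (r + 1, c + 1) then .bullet else C p)) ∨
  -- (2.4): at the diagonal, `• ūy / ōy → ōy ōy / •`
  (∃ v, C (c, c) = .bullet ∧ C (c, c + 1) = .letter v false ∧
    C (c + 1, c + 1) = .letter v true ∧
    C' = fun p => if p = (c, c) then .letter v true
      else if p = (c, c + 1) then .letter v true
      else if p = (c + 1, c + 1) then .bullet else C p) ∨
  -- (2.5) first: a letter slides onto the diagonal and is raised
  (∃ v h, C (c, c) = .bullet ∧ C (c, c + 1) = .letter v h ∧
    C' = fun p => if p = (c, c) then .letter v true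
      else if p = (c, c + 1) then .bullet else C p) ∨
  -- (2.5) second: a high letter leaves the diagonal and is lowered
  (∃ w hw v, C (c, c) = .letter w hw ∧ C (c, c + 1) = .bullet ∧
    C (c + 1, c + 1) = .letter v true ∧
    C' = fun p => if p = (c, c + 1) then .letter v false
      else if p = (c + 1, c + 1) then .bullet else C p) ∨
  -- (2.6) horizontal slide (off the diagonal)
  (r < c ∧ (∃ v h, C (r, c) = .bullet ∧ C (r, c + 1) = .letter v h ∧
    C' = fun p => if p = (r, c) then .letter v h
      else if p = (r, c + 1) then .bullet else C p)) ∨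
  -- (2.6) vertical slide
  (r + 1 ≤ c ∧ (∃ v h, C (r, c) = .bullet ∧ C (r + 1, c) = .letter v h ∧
    C' = fun p => if p = (r, c) then .letter v h
      else if p = (r + 1, c) then .bullet else C p))

/-- A bookkeeping step of mixed rectification that only creates or deletes
bullets/gaps (placing bullets in the bottom row of the inner shape, deleting
bullets with no entry to their southeast); letters are untouched. -/
def BulletStep (C C' : MConfig) : Prop :=
  ∀ p, C p = C' p ∨
    ((C p = .gap ∨ C p = .bullet) ∧ (C' p = .gap ∨ C' p = .bullet))

/-!
Every mixed slide rewrites at most three cells, and each write into a diagonal cell puts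
there a bullet or a high letter, with one exception: the second diagonal slide (2.1) with
`r = c` moves the entry of the diagonal cell `(c + 1, c + 1)` onto the diagonal, and that
entry is already high by the invariant. Bullet bookkeeping never touches letters.
-/

def NoLowOnDiagonal (C : MConfig) : Prop := ∀ c v, C (c, c) ≠ MEntry.letter v false

def HarmlessWrite (p : ℕ × ℕ) (e : MEntry) : Prop := p.1 ≠ p.2 ∨ ∀ v, e ≠ .letter v false

namespace HarmlessWrite

theorem of_lt {r c : ℕ} (h : r < c) (e : MEntry) : HarmlessWrite (r, c) e := .inl h.ne

theorem bullet (p : ℕ × ℕ) : HarmlessWrite p .bullet := .inr fun _ => nofun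

theorem high (p : ℕ × ℕ) (v : ℕ) : HarmlessWrite p (.letter v true) := .inr fun _ => nofun

end HarmlessWrite

namespace NoLowOnDiagonal

variable {C : MConfig}

theorem update (hC : NoLowOnDiagonal C) {p : ℕ × ℕ} {e : MEntry} (he : HarmlessWrite p e) :
    NoLowOnDiagonal fun q => if q = p then e else C q := by
  intro d v hv
  dsimp only at hv
  by_cases hp : (d, d) = p
  · subst hp
    rw [if_pos rfl] at hv
    exact he.elim (fun hne => hne rfl) (fun hlow => hlow v hv)
  · rw [if_neg hp] at hv
    exact hC d v hv

theorem harmlessWrite_of_southeast (hC : NoLowOnDiagonal C) {r c v : ℕ} {b : Bool}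
    (hrc : r ≤ c) (hse : C (r + 1, c + 1) = .letter v b) : HarmlessWrite (r, c) (.letter v b) := by
  rcases hrc.lt_or_eq with hlt | rfl
  · exact .of_lt hlt _
  · exact .inr fun w hw => hC (r + 1) w (hse.trans hw)

end NoLowOnDiagonal

open NoLowOnDiagonal HarmlessWrite in
theorem MixedSlide.noLowOnDiagonal {C C' : MConfig} (hs : MixedSlide C C')
    (hC : NoLowOnDiagonal C) : NoLowOnDiagonal C' := by
  obtain ⟨r, c, H⟩ := hs
  rcases H with ⟨hrc, -, -, -, v, b, -, rfl⟩ | ⟨hrc, -, -, -, v, b, hse, rfl⟩ |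
    ⟨hrc, -, -, v, -, -, -, -, -, rfl⟩ | ⟨-, -, -, v, -, -, -, -, -, rfl⟩ |
    ⟨-, -, -, -, -, v, -, -, -, -, -, -, rfl⟩ | ⟨hrc, v, -, -, -, -, rfl⟩ |
    ⟨-, v, -, -, -, -, rfl⟩ | ⟨v, -, -, -, rfl⟩ | ⟨v, b, -, -, rfl⟩ |
    ⟨-, -, v, -, -, -, rfl⟩ | ⟨hrc, v, b, -, -, rfl⟩ | ⟨hrc, v, b, -, -, rfl⟩
  · exact (hC.update (bullet _)).update (of_lt (by omega) _)
  · exact (hC.update (bullet _)).update (hC.harmlessWrite_of_southeast hrc hse)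
  · exact (hC.update (bullet _)).update (of_lt (by omega) _)
  · exact (hC.update (bullet _)).update (high _ v)
  · exact (hC.update (bullet _)).update (high _ v)
  · exact (hC.update (bullet _)).update (of_lt (by omega) _)
  · exact (hC.update (bullet _)).update (high _ v)
  · exact ((hC.update (bullet _)).update (high _ v)).update (high _ v)
  · exact (hC.update (bullet _)).update (high _ v)
  · exact (hC.update (bullet _)).update (of_lt (by omega) _)
  · exact (hC.update (bullet _)).update (of_lt hrc _)
  · exact (hC.update (bullet _)).update (of_lt (by omega) _)

theorem BulletStep.noLowOnDiagonal {C C' : MConfig} (hb : BulletStep C C')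
    (hC : NoLowOnDiagonal C) : NoLowOnDiagonal C' := by
  intro d v hv
  rcases hb (d, d) with he | ⟨-, hg | hg⟩
  · exact hC d v (he.trans hv)
  · exact MEntry.noConfusion (hg.symm.trans hv)
  · exact MEntry.noConfusion (hg.symm.trans hv)

/-- Invariant of mixed rectification: starting from a configuration with no
low entry in any diagonal cell, no configuration reachable by mixed slides and
bullet bookkeeping steps ever has a low entry in a diagonal cell. -/
theorem mixedRectification_no_low_on_diagonal (C₀ C : MConfig)
    (h0 : ∀ c v, C₀ (c, c) ≠ MEntry.letter v false)
    (h : Relation.ReflTransGen (fun X Y => MixedSlide X Y ∨ BulletStep X Y) C₀ C) :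
    ∀ c v, C (c, c) ≠ MEntry.letter v false := by
  induction h with
  | refl => exact h0
  | tail _ step ih => exact step.elim (·.noLowOnDiagonal ih) (·.noLowOnDiagonal ih)
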